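/- For the n/k-repetition-coded distributed algorithm with shifted-exponential task runtimes, the expected overall runtime equals (1/k)(1 + (k/(nμ)) H_k), where H_k is the k-th harmonic number. -/

import Mathlib

/-!
Let `Y = maxᵢ minⱼ T(i,j)`. Independence gives `ℙ(Y ≤ t) = ∏ᵢ (1 - ∏ⱼ ℙ(T(i,j) > t))`, and the `m`
survival functions of one group multiply to that of a shifted exponential of shift `1/k` and rate
`n μ`. The layer-cake formula `𝔼 Y = ∫_{t > 0} ℙ(Y > t) dt` then gives `1/k` from `(0, 1/k]` plus the
integral of `1 - (1 - e^{-nμ s})^k` over `s > 0`; expanding `1 - (1 - x)^k = ∑_{i<k} (1 - x)^i x`,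
the `i`-th term integrates to `1 / (nμ (i + 1))`.
-/

open MeasureTheory ProbabilityTheory Set Filter Topology

lemma lt_ciInf_iff_of_finite {α ι : Type*} [ConditionallyCompleteLinearOrder α] [Finite ι]
    [Nonempty ι] {f : ι → α} {a : α} : a < ⨅ i, f i ↔ ∀ i, a < f i := by
  refine ⟨fun h i ↦ h.trans_le (ciInf_le (Finite.bddBelow_range f) i), fun h ↦ ?_⟩
  obtain ⟨i, hi⟩ := exists_eq_ciInf_of_finite (f := f)
  exact hi ▸ h i

/-- No integrability is assumed: when `Y` is not integrable, both sides are junk `0`. -/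
lemma integral_eq_setIntegral_Ioi_measureReal_lt {Ω : Type*} [MeasurableSpace Ω] {P : Measure Ω}
    [IsFiniteMeasure P] {Y : Ω → ℝ} (hY : AEMeasurable Y P) (hY₀ : 0 ≤ᵐ[P] Y) :
    ∫ ω, Y ω ∂P = ∫ t in Ioi 0, P.real {ω | t < Y ω} := by
  have hanti : Antitone fun t ↦ P.real {ω | t < Y ω} := fun s t hst ↦
    measureReal_mono fun ω (hω : t < Y ω) ↦ hst.trans_lt hω
  rw [integral_eq_lintegral_of_nonneg_ae hY₀ hY.aestronglyMeasurable,
    lintegral_eq_lintegral_meas_lt P hY₀ hY,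
    integral_eq_lintegral_of_nonneg_ae (ae_of_all _ fun _ ↦ measureReal_nonneg)
      hanti.measurable.aestronglyMeasurable]
  congr 1
  exact lintegral_congr fun t ↦ (ofReal_measureReal (measure_ne_top P _)).symm

/-- `t ↦ ℙ(a + E > t)` for `E` exponential of rate `c`. -/
noncomputable def shiftedExpSurvival (a c t : ℝ) : ℝ :=
  if a ≤ t then Real.exp (-(c * (t - a))) else 1

lemma shiftedExpSurvival_pow (a c t : ℝ) (m : ℕ) :
    shiftedExpSurvival a c t ^ m = shiftedExpSurvival a (m * c) t := by
  unfold shiftedExpSurvival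
  split_ifs
  · rw [← Real.exp_nat_mul]
    ring_nf
  · exact one_pow m

section ExponentialIntegrals

variable {a c : ℝ}

lemma hasDerivAt_one_sub_exp_pow_div (hc : c ≠ 0) (i : ℕ) (x : ℝ) :
    HasDerivAt (fun t ↦ (1 - Real.exp (-(c * (t - a)))) ^ (i + 1) / (c * (i + 1)))
      ((1 - Real.exp (-(c * (x - a)))) ^ i * Real.exp (-(c * (x - a)))) x := by
  have hexp : HasDerivAt (fun t ↦ 1 - Real.exp (-(c * (t - a))))
      (Real.exp (-(c * (x - a))) * c) x := by
    simpa using ((((hasDerivAt_id x).sub_const a).const_mul c).neg.exp).const_sub 1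
  refine ((hexp.pow (i + 1)).div_const (c * (i + 1))).congr_deriv ?_
  field_simp
  push_cast
  ring

lemma one_sub_exp_pow_mul_exp_nonneg (hc : 0 ≤ c) (i : ℕ) {t : ℝ} (ht : a ≤ t) :
    0 ≤ (1 - Real.exp (-(c * (t - a)))) ^ i * Real.exp (-(c * (t - a))) := by
  have : Real.exp (-(c * (t - a))) ≤ 1 :=
    Real.exp_le_one_iff.2 (neg_nonpos.2 (mul_nonneg hc (sub_nonneg.2 ht)))
  exact mul_nonneg (pow_nonneg (sub_nonneg.2 this) i) (Real.exp_nonneg _)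

lemma tendsto_one_sub_exp_pow_div (hc : 0 < c) (i : ℕ) :
    Tendsto (fun t ↦ (1 - Real.exp (-(c * (t - a)))) ^ (i + 1) / (c * (i + 1))) atTop
      (𝓝 (1 / (c * (i + 1)))) := by
  have hexp : Tendsto (fun t ↦ Real.exp (-(c * (t - a)))) atTop (𝓝 0) :=
    Real.tendsto_exp_atBot.comp <| tendsto_neg_atTop_atBot.comp <|
      (tendsto_atTop_add_const_right _ (-a) tendsto_id).const_mul_atTop hc
  simpa using (((tendsto_const_nhds (x := (1 : ℝ))).sub hexp).pow (i + 1)).div_const (c * (i + 1))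

lemma integrableOn_one_sub_exp_pow_mul_exp (hc : 0 < c) (i : ℕ) :
    IntegrableOn (fun t ↦ (1 - Real.exp (-(c * (t - a)))) ^ i * Real.exp (-(c * (t - a))))
      (Ioi a) :=
  integrableOn_Ioi_deriv_of_nonneg' (fun x _ ↦ hasDerivAt_one_sub_exp_pow_div hc.ne' i x)
    (fun _ ht ↦ one_sub_exp_pow_mul_exp_nonneg hc.le i (le_of_lt ht))
    (tendsto_one_sub_exp_pow_div hc i)

lemma integral_Ioi_one_sub_exp_pow_mul_exp (hc : 0 < c) (i : ℕ) :
    ∫ t in Ioi a, (1 - Real.exp (-(c * (t - a)))) ^ i * Real.exp (-(c * (t - a))) =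
      1 / (c * (i + 1)) := by
  rw [integral_Ioi_of_hasDerivAt_of_nonneg' (fun x _ ↦ hasDerivAt_one_sub_exp_pow_div hc.ne' i x)
    (fun _ ht ↦ one_sub_exp_pow_mul_exp_nonneg hc.le i (le_of_lt ht))
    (tendsto_one_sub_exp_pow_div hc i)]
  simp

lemma one_sub_one_sub_pow_eq_sum (x : ℝ) (k : ℕ) :
    1 - (1 - x) ^ k = ∑ i ∈ Finset.range k, (1 - x) ^ i * x := by
  rw [← Finset.sum_mul, ← geom_sum_mul_neg, sub_sub_cancel]

lemma integrableOn_one_sub_one_sub_exp_pow (hc : 0 < c) (k : ℕ) :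
    IntegrableOn (fun t ↦ 1 - (1 - Real.exp (-(c * (t - a)))) ^ k) (Ioi a) := by
  simp_rw [one_sub_one_sub_pow_eq_sum]
  exact integrable_finsetSum _ fun i _ ↦ integrableOn_one_sub_exp_pow_mul_exp hc i

lemma integral_Ioi_one_sub_one_sub_exp_pow (hc : 0 < c) (k : ℕ) :
    ∫ t in Ioi a, (1 - (1 - Real.exp (-(c * (t - a)))) ^ k) =
      (∑ i ∈ Finset.range k, (1 : ℝ) / (i + 1)) / c := by
  simp_rw [one_sub_one_sub_pow_eq_sum]
  rw [integral_finsetSum _ fun i _ ↦ integrableOn_one_sub_exp_pow_mul_exp hc i, Finset.sum_div]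
  refine Finset.sum_congr rfl fun i _ ↦ ?_
  rw [integral_Ioi_one_sub_exp_pow_mul_exp hc, div_div, mul_comm]

lemma integral_Ioi_zero_one_sub_one_sub_shiftedExpSurvival_pow (ha : 0 ≤ a) (hc : 0 < c)
    {k : ℕ} (hk : k ≠ 0) :
    ∫ t in Ioi 0, (1 - (1 - shiftedExpSurvival a c t) ^ k) =
      a + (∑ i ∈ Finset.range k, (1 : ℝ) / (i + 1)) / c := by
  have hbefore : ∀ t ∈ Ioc 0 a, 1 - (1 - shiftedExpSurvival a c t) ^ k = 1 := by
    intro t ht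
    unfold shiftedExpSurvival
    split_ifs with hat
    · simp [le_antisymm ht.2 hat, hk]
    · simp [hk]
  have hafter : ∀ t ∈ Ioi a, 1 - (1 - shiftedExpSurvival a c t) ^ k =
      1 - (1 - Real.exp (-(c * (t - a)))) ^ k :=
    fun t ht ↦ by rw [shiftedExpSurvival, if_pos (le_of_lt ht)]
  rw [← Ioc_union_Ioi_eq_Ioi ha, setIntegral_union Ioc_disjoint_Ioi_same measurableSet_Ioi
      ((integrableOn_const measure_Ioc_lt_top.ne).congr_fun (fun t ht ↦ (hbefore t ht).symm)
        measurableSet_Ioc)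
      ((integrableOn_one_sub_one_sub_exp_pow hc k).congr_fun (fun t ht ↦ (hafter t ht).symm)
        measurableSet_Ioi),
    setIntegral_congr_fun measurableSet_Ioc hbefore, setIntegral_congr_fun measurableSet_Ioi hafter,
    integral_Ioi_one_sub_one_sub_exp_pow hc]
  simp [ha]

end ExponentialIntegrals

namespace ProbabilityTheory

variable {Ω : Type*} [MeasurableSpace Ω] {P : Measure Ω}

lemma iIndepFun.curry {ι κ 𝓧 : Type*} [MeasurableSpace 𝓧] [IsProbabilityMeasure P]
    {X : ι × κ → Ω → 𝓧} (hX : ∀ p, Measurable (X p)) (h : iIndepFun X P) :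
    iIndepFun (fun i ω j ↦ X (i, j) ω) P := by
  have := fun p ↦ Measure.isProbabilityMeasure_map (μ := P) (hX p).aemeasurable
  have hrow : ∀ i, P.map (fun ω j ↦ X (i, j) ω) = Measure.infinitePi fun j ↦ P.map (X (i, j)) :=
    fun i ↦ (h.precomp (Prod.mk_right_injective i)).map_fun_eq_infinitePi_map fun j ↦ hX _
  rw [iIndepFun_iff_map_fun_eq_infinitePi_map (fun i ↦ by fun_prop)]
  calc P.map (fun ω i j ↦ X (i, j) ω)
      = (P.map fun ω p ↦ X p ω).map (MeasurableEquiv.curry ι κ 𝓧) := by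
        rw [Measure.map_map (by fun_prop) (by fun_prop)]; rfl
    _ = Measure.infinitePi fun i ↦ Measure.infinitePi fun j ↦ P.map (X (i, j)) := by
        rw [h.map_fun_eq_infinitePi_map hX]
        exact Measure.infinitePi_map_curry fun i j ↦ P.map (X (i, j))
    _ = _ := by simp_rw [hrow]

lemma probReal_lt_eq_one_sub_probReal_le [IsProbabilityMeasure P] {Z : Ω → ℝ}
    (hZ : Measurable Z) (t : ℝ) : P.real {ω | t < Z ω} = 1 - P.real {ω | Z ω ≤ t} := by
  simp_rw [← not_le]
  exact probReal_compl_eq_one_sub (hZ measurableSet_Iic)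

lemma probReal_lt_eq_shiftedExpSurvival [IsProbabilityMeasure P] {Z : Ω → ℝ}
    (hZ : Measurable Z) {k μ : ℝ} (hk : 0 < k) (hμ : 0 ≤ μ) {t : ℝ}
    (hcdf : P {ω | Z ω ≤ t} =
      ENNReal.ofReal (if 1 ≤ k * t then 1 - Real.exp (-μ * (k * t - 1)) else 0)) :
    P.real {ω | t < Z ω} = shiftedExpSurvival (1 / k) (k * μ) t := by
  rw [probReal_lt_eq_one_sub_probReal_le hZ, measureReal_def, hcdf, shiftedExpSurvival]
  simp only [div_le_iff₀' hk]
  split_ifs with hkt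
  · have hexp : Real.exp (-μ * (k * t - 1)) ≤ 1 := Real.exp_le_one_iff.2 (by nlinarith)
    rw [ENNReal.toReal_ofReal (sub_nonneg.2 hexp), sub_sub_cancel]
    congr 1
    field_simp
  · simp

lemma iIndepFun.measureReal_iSup_le {ι : Type*} [Fintype ι] [Nonempty ι] {Y : ι → Ω → ℝ}
    (h : iIndepFun Y P) (t : ℝ) :
    P.real {ω | ⨆ i, Y i ω ≤ t} = ∏ i, P.real {ω | Y i ω ≤ t} := by
  have hset : {ω | ⨆ i, Y i ω ≤ t} = ⋂ i, Y i ⁻¹' Iic t := by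
    ext ω; simp [ciSup_le_iff (Finite.bddAbove_range _)]
  rw [hset, measureReal_def, h.meas_iInter fun i ↦ ⟨Iic t, measurableSet_Iic, rfl⟩,
    ENNReal.toReal_prod]
  rfl

lemma iIndepFun.measureReal_lt_iInf {κ : Type*} [Fintype κ] [Nonempty κ] {Y : κ → Ω → ℝ}
    (h : iIndepFun Y P) (t : ℝ) :
    P.real {ω | t < ⨅ j, Y j ω} = ∏ j, P.real {ω | t < Y j ω} := by
  have hset : {ω | t < ⨅ j, Y j ω} = ⋂ j, Y j ⁻¹' Ioi t := by
    ext ω; simp [lt_ciInf_iff_of_finite]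
  rw [hset, measureReal_def, h.meas_iInter fun j ↦ ⟨Ioi t, measurableSet_Ioi, rfl⟩,
    ENNReal.toReal_prod]
  rfl

lemma iIndepFun.measureReal_lt_iSup_iInf {ι κ : Type*} [Fintype ι] [Nonempty ι] [Fintype κ]
    [Nonempty κ] [IsProbabilityMeasure P] {X : ι × κ → Ω → ℝ} (hX : ∀ p, Measurable (X p))
    (h : iIndepFun X P) (t : ℝ) :
    P.real {ω | t < ⨆ i, ⨅ j, X (i, j) ω} = 1 - ∏ i, (1 - ∏ j, P.real {ω | t < X (i, j) ω}) := by
  have hmin : iIndepFun (fun i ω ↦ ⨅ j, X (i, j) ω) P :=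
    (h.curry hX).comp (fun _ v ↦ ⨅ j, v j) fun _ ↦ by fun_prop
  rw [probReal_lt_eq_one_sub_probReal_le (by fun_prop), hmin.measureReal_iSup_le]
  congr! with i
  rw [← (h.precomp (Prod.mk_right_injective i)).measureReal_lt_iInf,
    probReal_lt_eq_one_sub_probReal_le (by fun_prop), sub_sub_cancel]

end ProbabilityTheory

/-- For the `n/k`-repetition-coded distributed algorithm with shifted-exponential task
runtimes (`n = k * m` workers split into `k` groups of `m`, each worker runtime with
CDF `F(kt)`, `F(t) = 1 - e^{-μ(t-1)}` for `t ≥ 1`), the expected overall runtime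
(max over groups of the min within each group) equals `(1/k)(1 + (k/(nμ)) H_k)`. -/
theorem expected_runtime_repetition_coded
    {Ω : Type*} [MeasureSpace Ω] [IsProbabilityMeasure (ℙ : Measure Ω)]
    (n k m : ℕ) (hk : 0 < k) (hm : 0 < m) (hnm : n = k * m) (μ : ℝ) (hμ : 0 < μ)
    (T : Fin k × Fin m → Ω → ℝ)
    (hmeas : ∀ i, Measurable (T i))
    (hindep : iIndepFun (m := fun _ => (inferInstance : MeasurableSpace ℝ)) T ℙ)
    (hdist : ∀ i, ∀ t : ℝ,
      ℙ {ω | T i ω ≤ t} =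
        ENNReal.ofReal (if 1 ≤ (k : ℝ) * t then 1 - Real.exp (-μ * ((k : ℝ) * t - 1)) else 0)) :
    ∫ ω, (⨆ g : Fin k, ⨅ j : Fin m, T (g, j) ω) ∂ℙ =
      (1 / (k : ℝ)) *
        (1 + ((k : ℝ) / ((n : ℝ) * μ)) * (∑ i ∈ Finset.range k, (1 : ℝ) / (i + 1))) := by
  subst hnm
  have : Nonempty (Fin k) := Fin.pos_iff_nonempty.mp hk
  have : Nonempty (Fin m) := Fin.pos_iff_nonempty.mp hm
  have hsurv : ∀ p t, (ℙ : Measure Ω).real {ω | t < T p ω} =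
      shiftedExpSurvival (1 / k) (k * μ) t := fun p t ↦
    probReal_lt_eq_shiftedExpSurvival (hmeas p) (Nat.cast_pos.2 hk) hμ.le (hdist p t)
  have hY₀ : 0 ≤ᵐ[ℙ] fun ω ↦ ⨆ g, ⨅ j, T (g, j) ω := by
    have hT₀ : ∀ p, ∀ᵐ ω ∂ℙ, 0 ≤ T p ω := fun p ↦
      have hnull : (ℙ : Measure Ω) {ω | T p ω ≤ 0} = 0 := by norm_num [hdist]
      (measure_eq_zero_iff_ae_notMem.1 hnull).mono fun ω hω ↦ (not_le.1 hω).le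
    filter_upwards [ae_all_iff.2 hT₀] with ω hω
    exact Real.iSup_nonneg fun g ↦ Real.iInf_nonneg fun j ↦ hω _
  have htail : ∀ t, (ℙ : Measure Ω).real {ω | t < ⨆ g, ⨅ j, T (g, j) ω} =
      1 - (1 - shiftedExpSurvival (1 / k) (m * (k * μ)) t) ^ k := fun t ↦ by
    simp only [hindep.measureReal_lt_iSup_iInf hmeas, hsurv, Finset.prod_const, Finset.card_univ,
      Fintype.card_fin, shiftedExpSurvival_pow]
  rw [integral_eq_setIntegral_Ioi_measureReal_lt (by fun_prop) hY₀]
  simp_rw [htail]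
  rw [integral_Ioi_zero_one_sub_one_sub_shiftedExpSurvival_pow (by positivity) (by positivity)
    hk.ne']
  push_cast
  field_simp
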